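/- Let m ≥ 1 and n ≥ 0 be integers and let R > 1 be real. Then (1/(2πi)) · ∮_{|ζ|=R} ζ^{2m} / ((ζ−1)^{1/2}(ζ+1)^{1/2}·(ζ−1)^{n+1}) dζ = ∑_{j=0}^{⌊(2m−n−1)/2⌋} ((1/2)_j / j!) · C(2m−1−2j, 2m−n−1−2j) if n ≤ 2m−1, and the integral equals 0 if n ≥ 2m. Here the integral is over the positively oriented circle of radius R centered at 0, each square root is the principal complex square root, (1/2)_j is the Pochhammer symbol, and C(·,·) is the binomial coefficient. -/

import Mathlib

/-!
For `‖ζ‖ > 1` the two principal square roots combine to `(ζ - 1)^{1/2} (ζ + 1)^{1/2} =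
ζ (1 - ζ⁻²)^{1/2}`: both sides square to `ζ² - 1` and agree at `ζ = 2`, hence agree on the
connected set `{‖ζ‖ > 1} ∩ slitPlane`, and the negative real axis is checked by hand. So the
integrand is `ζ^{2m-n-2} (1 - ζ⁻²)^{-1/2} (1 - ζ⁻¹)^{-(n+1)}`, and multiplying the two binomial
series in `w = ζ⁻¹` gives an absolutely convergent Laurent series
`∑ C(j - 1/2, j) C(n + k, n) ζ^{2m-n-2-2j-k}`. Integrating term by term, only the terms with
`2j + k = 2m - n - 1` survive, each contributing `2πi` times its coefficient.
-/

open Finset Complex Metric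
open scoped Real Nat ENNReal

/-- The Pochhammer symbol (rising factorial) `(x)_j = x (x+1) ⋯ (x+j-1)`, with `(x)_0 = 1`. -/
noncomputable def pochC (x : ℂ) (j : ℕ) : ℂ := ∏ i ∈ Finset.range j, (x + (i : ℂ))

theorem ascPochhammer_eval_eq_pochC (a : ℂ) (j : ℕ) :
    (ascPochhammer ℂ j).eval a = pochC a j := by
  induction j with
  | zero => simp [pochC]
  | succ j ih => rw [ascPochhammer_succ_eval, ih, pochC, pochC, prod_range_succ]

theorem ringChoose_add_sub_one_eq_pochC_div_factorial (a : ℂ) (j : ℕ) :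
    Ring.choose (a + j - 1) j = pochC a j / j ! := by
  rw [Ring.choose_eq_smul, Polynomial.descPochhammer_smeval_eq_ascPochhammer,
    Polynomial.ascPochhammer_smeval_eq_eval, show a + j - 1 - j + 1 = a by ring,
    ascPochhammer_eval_eq_pochC, smul_eq_mul, inv_mul_eq_div]

section OfScalars

variable {f : ℂ → ℂ} {c : ℕ → ℂ} {r : ℝ≥0∞} {x : ℂ}

theorem HasFPowerSeriesOnBall.hasSum_ofScalars
    (hf : HasFPowerSeriesOnBall f (.ofScalars ℂ c) 0 r) (hx : ‖x‖ₑ < r) :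
    HasSum (fun n => c n * x ^ n) (f x) := by
  simpa [FormalMultilinearSeries.ofScalars_apply_eq, mul_comm] using
    hf.hasSum (y := x) (by simpa using hx)

theorem HasFPowerSeriesOnBall.summable_norm_ofScalars
    (hf : HasFPowerSeriesOnBall f (.ofScalars ℂ c) 0 r) (hx : ‖x‖ₑ < r) :
    Summable fun n => ‖c n * x ^ n‖ := by
  simpa [FormalMultilinearSeries.ofScalars_apply_eq, mul_comm] using
    (FormalMultilinearSeries.ofScalars ℂ c).summable_norm_apply (x := x)
      (by simpa using hx.trans_le hf.r_le)

end OfScalars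

/-- The coefficient of `w ^ (2 * p.1 + p.2)` in `(1 - w ^ 2) ^ (-1/2) * (1 - w) ^ (-(n + 1))`. -/
noncomputable def doubleCoeff (n : ℕ) (p : ℕ × ℕ) : ℂ :=
  Ring.choose ((1 / 2 : ℂ) + p.1 - 1) p.1 * (n + p.2).choose n

theorem summable_norm_mul_prod {ι κ : Type*} {f : ι → ℂ} {g : κ → ℂ}
    (hf : Summable fun i => ‖f i‖) (hg : Summable fun k => ‖g k‖) :
    Summable fun p : ι × κ => ‖f p.1 * g p.2‖ := by
  simpa only [norm_mul] using
    summable_mul_of_summable_norm (R := ℝ) (f := fun i => ‖f i‖) (g := fun k => ‖g k‖)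
      (by simpa only [norm_norm] using hf) (by simpa only [norm_norm] using hg)

section DoubleSeries

variable (n : ℕ) {w : ℂ}

theorem doubleCoeff_mul_pow (p : ℕ × ℕ) :
    doubleCoeff n p * w ^ (2 * p.1 + p.2) =
      Ring.choose ((1 / 2 : ℂ) + p.1 - 1) p.1 * (w ^ 2) ^ p.1 *
        ((n + p.2).choose n * w ^ p.2) := by
  rw [doubleCoeff]; ring

theorem hasSum_and_summable_norm_doubleCoeff (hw : ‖w‖ < 1) :
    HasSum (fun p => doubleCoeff n p * w ^ (2 * p.1 + p.2))
        (1 / (1 - w ^ 2) ^ (1 / 2 : ℂ) * (1 / (1 - w) ^ (n + 1))) ∧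
      Summable fun p => ‖doubleCoeff n p * w ^ (2 * p.1 + p.2)‖ := by
  have hw₁ : ‖w‖ₑ < 1 := by rwa [← ofReal_norm, ENNReal.ofReal_lt_one]
  have hw₂ : ‖w ^ 2‖ₑ < 1 := by
    rw [← ofReal_norm, ENNReal.ofReal_lt_one, norm_pow]
    exact pow_lt_one₀ (norm_nonneg w) hw two_ne_zero
  have hsqrt : HasFPowerSeriesOnBall (fun x : ℂ ↦ 1 / (1 - x) ^ (1 / 2 : ℂ))
      (.ofScalars ℂ fun j ↦ Ring.choose ((1 / 2 : ℂ) + j - 1) j) 0 1 :=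
    one_div_one_sub_cpow_hasFPowerSeriesOnBall_zero (1 / 2)
  have hpow := one_div_one_sub_pow_hasFPowerSeriesOnBall_zero n
  have hnorm := summable_norm_mul_prod (hsqrt.summable_norm_ofScalars hw₂)
    (hpow.summable_norm_ofScalars hw₁)
  exact ⟨((hsqrt.hasSum_ofScalars hw₂).mul (hpow.hasSum_ofScalars hw₁) hnorm.of_norm).congr_fun
    (doubleCoeff_mul_pow n), hnorm.congr fun p => by rw [doubleCoeff_mul_pow]⟩

end DoubleSeries

theorem add_ofReal_mem_slitPlane {z : ℂ} (hz : z ∈ slitPlane) (hz₁ : 1 < ‖z‖) {a : ℝ}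
    (ha : |a| ≤ 1) : z + a ∈ slitPlane := by
  rw [mem_slitPlane_iff] at hz ⊢
  by_cases him : z.im = 0
  · have hre : 0 < z.re := hz.resolve_right (not_not.2 him)
    have hz_eq : ‖z‖ = z.re := by rw [← abs_re_eq_norm.2 him, abs_of_pos hre]
    left
    simp only [add_re, ofReal_re]
    linarith [neg_abs_le a]
  · exact Or.inr (by simpa using him)

theorem isPreconnected_one_lt_norm_inter_slitPlane :
    IsPreconnected ({z : ℂ | 1 < ‖z‖} ∩ slitPlane) := by
  have himage : {z : ℂ | 1 < ‖z‖} ∩ slitPlane =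
      exp '' ({w : ℂ | 0 < w.re} ∩ {w | w.im ∈ Set.Ioo (-π) π}) := by
    ext z
    constructor
    · rintro ⟨hz₁, hz⟩
      refine ⟨log z, ⟨?_, ?_⟩, exp_log (slitPlane_ne_zero hz)⟩
      · simpa [log_re] using Real.log_pos hz₁
      · rw [Set.mem_ofPred_eq, log_im]
        exact ⟨neg_pi_lt_arg z, (arg_le_pi z).lt_of_ne (slitPlane_arg_ne_pi hz)⟩
    · rintro ⟨w, ⟨hre, him⟩, rfl⟩
      refine ⟨by simpa [norm_exp] using hre, ?_⟩
      rw [exp_mem_slitPlane, (toIocMod_eq_self _).2 ⟨him.1, by linarith [him.2]⟩]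
      exact him.2.ne
  rw [himage]
  refine (Convex.isPreconnected ?_).image _ continuous_exp.continuousOn
  exact (convex_halfSpace_re_gt 0).inter
    ((convex_Ioo (-π) π).linear_preimage imLm)

theorem ofReal_cpow_half {t : ℝ} (ht : 0 ≤ t) : (t : ℂ) ^ (1 / 2 : ℂ) = √t := by
  rw [Real.sqrt_eq_rpow, ofReal_cpow ht]
  norm_num

theorem ofReal_cpow_half_of_nonpos {t : ℝ} (ht : t ≤ 0) :
    (t : ℂ) ^ (1 / 2 : ℂ) = √(-t) * I := by
  rw [ofReal_cpow_of_nonpos ht, ← ofReal_neg, ofReal_cpow_half (neg_nonneg.2 ht),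
    show ↑π * I * (1 / 2) = ↑π / 2 * I by ring, exp_pi_div_two_mul_I]

theorem Real.sqrt_sq_sub_one {x : ℝ} (hx : x ≠ 0) : √(x ^ 2 - 1) = |x| * √(1 - x⁻¹ ^ 2) := by
  rw [← Real.sqrt_sq_eq_abs, ← Real.sqrt_mul (sq_nonneg x)]
  congr 1
  field_simp

theorem ofReal_sub_one_cpow_half_mul_add_one_cpow_half {x : ℝ} (hx : 1 < |x|) :
    ((x : ℂ) - 1) ^ (1 / 2 : ℂ) * ((x : ℂ) + 1) ^ (1 / 2 : ℂ) =
      x * (1 - (x : ℂ)⁻¹ ^ 2) ^ (1 / 2 : ℂ) := by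
  have hx0 : x ≠ 0 := by rintro rfl; norm_num at hx
  have hx2 : 1 < x ^ 2 := by simpa using one_lt_sq_iff_one_lt_abs x |>.2 hx
  have hinv : 0 ≤ 1 - x⁻¹ ^ 2 := by
    rw [sub_nonneg, inv_pow]
    exact inv_le_one_of_one_le₀ hx2.le
  rw [show (x : ℂ) - 1 = ((x - 1 : ℝ) : ℂ) by push_cast; ring,
    show (x : ℂ) + 1 = ((x + 1 : ℝ) : ℂ) by push_cast; ring,
    show (1 : ℂ) - (x : ℂ)⁻¹ ^ 2 = ((1 - x⁻¹ ^ 2 : ℝ) : ℂ) by push_cast; ring,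
    ofReal_cpow_half hinv, ← ofReal_mul]
  rcases lt_abs.1 hx with h | h
  · rw [ofReal_cpow_half (by linarith), ofReal_cpow_half (by linarith), ← ofReal_mul,
      ← Real.sqrt_mul (by linarith), show (x - 1) * (x + 1) = x ^ 2 - 1 by ring,
      Real.sqrt_sq_sub_one hx0, abs_of_pos (by linarith)]
  · rw [ofReal_cpow_half_of_nonpos (by linarith), ofReal_cpow_half_of_nonpos (by linarith),
      mul_mul_mul_comm, I_mul_I, ← ofReal_mul, ← Real.sqrt_mul (by linarith),
      show -(x - 1) * -(x + 1) = x ^ 2 - 1 by ring, Real.sqrt_sq_sub_one hx0,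
      abs_of_neg (by linarith)]
    push_cast
    ring

theorem cpow_half_sq (u : ℂ) : (u ^ (1 / 2 : ℂ)) ^ 2 = u := by
  rw [one_div]
  exact_mod_cast cpow_nat_inv_pow u two_ne_zero

theorem one_sub_inv_sq_mem_slitPlane {z : ℂ} (hz : 1 < ‖z‖) : 1 - z⁻¹ ^ 2 ∈ slitPlane := by
  rw [sub_eq_add_neg]
  apply mem_slitPlane_of_norm_lt_one
  rw [norm_neg, norm_pow, norm_inv]
  exact pow_lt_one₀ (by positivity) (inv_lt_one_of_one_lt₀ hz) two_ne_zero

theorem sub_one_cpow_half_mul_add_one_cpow_half {z : ℂ} (hz : 1 < ‖z‖) :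
    (z - 1) ^ (1 / 2 : ℂ) * (z + 1) ^ (1 / 2 : ℂ) = z * (1 - z⁻¹ ^ 2) ^ (1 / 2 : ℂ) := by
  by_cases hslit : z ∈ slitPlane
  swap
  · obtain ⟨hre, him⟩ := le_def.1 (not_not.1 (mem_slitPlane_iff_not_le_zero.not.1 hslit))
    have hz_re : z = (z.re : ℂ) := ext rfl (by simpa using him)
    rw [hz_re]
    exact ofReal_sub_one_cpow_half_mul_add_one_cpow_half (by rwa [abs_re_eq_norm.2 him])
  set U := {z : ℂ | 1 < ‖z‖} ∩ slitPlane
  have hsub : ∀ z ∈ U, z - 1 ∈ slitPlane := fun z hz => by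
    simpa [sub_eq_add_neg] using add_ofReal_mem_slitPlane hz.2 hz.1 (a := -1) (by norm_num)
  have hadd : ∀ z ∈ U, z + 1 ∈ slitPlane := fun z hz => by
    simpa using add_ofReal_mem_slitPlane hz.2 hz.1 (a := 1) (by norm_num)
  have hf : ContinuousOn (fun z : ℂ => (z - 1) ^ (1 / 2 : ℂ) * (z + 1) ^ (1 / 2 : ℂ)) U :=
    fun z hz => (((continuousAt_id.sub continuousAt_const).cpow continuousAt_const
      (hsub z hz)).mul ((continuousAt_id.add continuousAt_const).cpow continuousAt_const
        (hadd z hz))).continuousWithinAt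
  have hg : ContinuousOn (fun z : ℂ => z * (1 - z⁻¹ ^ 2) ^ (1 / 2 : ℂ)) U := by
    intro z hz
    have hz0 : z ≠ 0 := norm_pos_iff.1 (one_pos.trans hz.1)
    exact (continuousAt_id.mul ((continuousAt_const.sub ((continuousAt_inv₀ hz0).pow 2)).cpow
      continuousAt_const (one_sub_inv_sq_mem_slitPlane hz.1))).continuousWithinAt
  refine isPreconnected_one_lt_norm_inter_slitPlane.eq_of_sq_eq hf hg (fun z hz => ?_)
    (fun {z} hz => ?_) (y := 2) ⟨by norm_num, by norm_num⟩ ?_ ⟨hz, hslit⟩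
  · have hz0 : z ≠ 0 := norm_pos_iff.1 (one_pos.trans hz.1)
    simp only [Pi.pow_apply, mul_pow, cpow_half_sq]
    field_simp
    ring
  · have hz0 : z ≠ 0 := norm_pos_iff.1 (one_pos.trans hz.1)
    exact mul_ne_zero hz0 (cpow_ne_zero_iff.2
      (Or.inl (slitPlane_ne_zero (one_sub_inv_sq_mem_slitPlane hz.1))))
  · simpa using ofReal_sub_one_cpow_half_mul_add_one_cpow_half (x := 2) (by norm_num)

theorem circleIntegral_zpow_center_zero {R : ℝ} (hR : R ≠ 0) (q : ℤ) :
    (∮ z in C(0, R), z ^ q) = if q = -1 then 2 * π * I else 0 := by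
  split_ifs with hq
  · simpa [hq] using circleIntegral.integral_sub_center_inv 0 hR
  · simpa using circleIntegral.integral_sub_zpow_of_ne hq 0 0 R

theorem hasSum_circleIntegral_of_hasSum_zpow {ι : Type*} [Countable ι] {c : ι → ℂ} {q : ι → ℤ}
    {F : ℂ → ℂ} {R : ℝ} (hR : 0 < R) (hc : Summable fun i => ‖c i‖ * R ^ q i)
    (hF : ∀ z ∈ sphere (0 : ℂ) R, HasSum (fun i => c i * z ^ q i) (F z)) :
    HasSum (fun i => if q i = -1 then 2 * π * I * c i else 0) (∮ z in C(0, R), F z) := by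
  have hne : ∀ θ, circleMap 0 R θ ≠ 0 := fun θ => circleMap_ne_center hR.ne'
  have hint : HasSum (fun i => ∮ z in C(0, R), c i * z ^ q i) (∮ z in C(0, R), F z) := by
    refine intervalIntegral.hasSum_integral_of_dominated_convergence
      (fun i _ => R * (‖c i‖ * R ^ q i)) (fun i => ?_) (fun i => ?_) ?_ intervalIntegrable_const ?_
    · simp only [deriv_circleMap, smul_eq_mul]
      exact (((continuous_circleMap 0 R).mul continuous_const).mul (continuous_const.mul
        ((continuous_circleMap 0 R).zpow₀ _ fun θ => Or.inl (hne θ)))).aestronglyMeasurable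
    · refine .of_forall fun θ _ => le_of_eq ?_
      simp [norm_zpow, abs_of_pos hR]
    · exact .of_forall fun θ _ => hc.mul_left R
    · exact .of_forall fun θ _ => (hF _ (circleMap_mem_sphere 0 hR.le θ)).const_smul _
  convert hint using 2 with i
  rw [circleIntegral.integral_const_mul, circleIntegral_zpow_center_zero hR.ne']
  split_ifs <;> ring

theorem div_eq_zpow_mul_one_div_mul_one_div {ζ : ℂ} (hζ : 1 < ‖ζ‖) (k n : ℕ) :
    ζ ^ k / ((ζ - 1) ^ (1 / 2 : ℂ) * (ζ + 1) ^ (1 / 2 : ℂ) * (ζ - 1) ^ (n + 1)) =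
      ζ ^ ((k : ℤ) - n - 2) * (1 / (1 - ζ⁻¹ ^ 2) ^ (1 / 2 : ℂ) * (1 / (1 - ζ⁻¹) ^ (n + 1))) := by
  have hζ0 : ζ ≠ 0 := norm_pos_iff.1 (one_pos.trans hζ)
  have hw : 1 - ζ⁻¹ ≠ 0 := sub_ne_zero.2 fun h => by
    rw [← inv_inv ζ, ← h, inv_one, norm_one] at hζ
    exact lt_irrefl _ hζ
  have hs : (1 - ζ⁻¹ ^ 2) ^ (1 / 2 : ℂ) ≠ 0 :=
    cpow_ne_zero_iff.2 (Or.inl (slitPlane_ne_zero (one_sub_inv_sq_mem_slitPlane hζ)))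
  rw [sub_one_cpow_half_mul_add_one_cpow_half hζ, show ζ - 1 = ζ * (1 - ζ⁻¹) by field_simp,
    zpow_sub₀ hζ0, zpow_sub₀ hζ0, zpow_natCast, zpow_natCast]
  generalize (1 - ζ⁻¹ ^ 2) ^ (1 / 2 : ℂ) = s at hs ⊢
  generalize 1 - ζ⁻¹ = t at hw ⊢
  field_simp
  ring

theorem hasSum_doubleCoeff_mul_zpow (k n : ℕ) {ζ : ℂ} (hζ : 1 < ‖ζ‖) :
    HasSum (fun p => doubleCoeff n p * ζ ^ ((k : ℤ) - n - 2 - ↑(2 * p.1 + p.2)))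
      (ζ ^ k / ((ζ - 1) ^ (1 / 2 : ℂ) * (ζ + 1) ^ (1 / 2 : ℂ) * (ζ - 1) ^ (n + 1))) := by
  have hζ0 : ζ ≠ 0 := norm_pos_iff.1 (one_pos.trans hζ)
  have hw : ‖ζ⁻¹‖ < 1 := by rw [norm_inv]; exact inv_lt_one_of_one_lt₀ hζ
  rw [div_eq_zpow_mul_one_div_mul_one_div hζ]
  refine ((hasSum_and_summable_norm_doubleCoeff n hw).1.mul_left
    (ζ ^ ((k : ℤ) - n - 2))).congr_fun fun p => ?_
  rw [zpow_sub₀ hζ0 _ (2 * p.1 + p.2 : ℕ), zpow_natCast, inv_pow]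
  ring

theorem summable_norm_doubleCoeff_mul_zpow (k n : ℕ) {R : ℝ} (hR : 1 < R) :
    Summable fun p => ‖doubleCoeff n p‖ * R ^ ((k : ℤ) - n - 2 - ↑(2 * p.1 + p.2)) := by
  have hR0 : R ≠ 0 := by positivity
  have hw : ‖(R : ℂ)⁻¹‖ < 1 := by
    rw [norm_inv, norm_real, Real.norm_of_nonneg (by positivity)]
    exact inv_lt_one_of_one_lt₀ hR
  refine ((hasSum_and_summable_norm_doubleCoeff n hw).2.mul_left
    (R ^ ((k : ℤ) - n - 2))).congr fun p => ?_
  rw [norm_mul, norm_pow, norm_inv, norm_real, Real.norm_of_nonneg (by positivity),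
    zpow_sub₀ hR0 _ (2 * p.1 + p.2 : ℕ), zpow_natCast, inv_pow]
  ring

theorem hasSum_circleIntegral_pow_div (k n : ℕ) {R : ℝ} (hR : 1 < R) :
    HasSum (fun p : ℕ × ℕ => if (k : ℤ) - n - 2 - ↑(2 * p.1 + p.2) = -1 then
        2 * π * I * doubleCoeff n p else 0)
      (∮ ζ in C(0, R),
        ζ ^ k / ((ζ - 1) ^ (1 / 2 : ℂ) * (ζ + 1) ^ (1 / 2 : ℂ) * (ζ - 1) ^ (n + 1))) :=
  hasSum_circleIntegral_of_hasSum_zpow (by positivity)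
    (summable_norm_doubleCoeff_mul_zpow k n hR)
    fun _ hζ => hasSum_doubleCoeff_mul_zpow k n (by rwa [mem_sphere_zero_iff_norm.1 hζ])

theorem hasSum_ite_two_mul_add_eq {M : Type*} [AddCommMonoid M] [TopologicalSpace M]
    (f : ℕ × ℕ → M) (N : ℕ) :
    HasSum (fun p : ℕ × ℕ => if 2 * p.1 + p.2 = N then f p else 0)
      (∑ j ∈ range (N / 2 + 1), f (j, N - 2 * j)) := by
  have himage : ∑ j ∈ range (N / 2 + 1), f (j, N - 2 * j) =
      ∑ p ∈ (range (N / 2 + 1)).image (fun j => (j, N - 2 * j)),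
        if 2 * p.1 + p.2 = N then f p else 0 := by
    rw [sum_image fun a _ b _ h => (Prod.ext_iff.1 h).1]
    refine sum_congr rfl fun j hj => (if_pos ?_).symm
    simp only [mem_range] at hj
    omega
  rw [himage]
  refine hasSum_sum_of_ne_finset_zero fun p hp =>
    if_neg fun h => hp (mem_image.2 ⟨p.1, ?_, ?_⟩)
  · simp only [mem_range]
    omega
  · ext <;> simp only; omega

/-- for `m ≥ 1`, `n ≥ 0` and `R > 1`, the endpoint Taylor-coefficient integrals
for the exponential weight: if `n ≤ 2m-1` then
`(1/(2πi)) ∮_{|ζ|=R} ζ^{2m}/((ζ-1)^{1/2}(ζ+1)^{1/2}(ζ-1)^{n+1}) dζ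
  = ∑_{j=0}^{⌊(2m-n-1)/2⌋} ((1/2)_j/j!) C(2m-1-2j, 2m-n-1-2j)`,
and if `n ≥ 2m` the integral equals `0`. -/
theorem circle_integral_exponential_weight_coeffs (m n : ℕ) (hm : 1 ≤ m)
    (R : ℝ) (hR : 1 < R) :
    (n ≤ 2 * m - 1 →
      (1 / (2 * Real.pi * Complex.I)) *
          (∮ ζ in C(0, R), ζ ^ (2 * m) /
            ((ζ - 1) ^ (1 / 2 : ℂ) * (ζ + 1) ^ (1 / 2 : ℂ) * (ζ - 1) ^ (n + 1)))
        = ∑ j ∈ Finset.range ((2 * m - n - 1) / 2 + 1),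
            pochC (1 / 2) j / (j.factorial : ℂ) *
              ((2 * m - 1 - 2 * j).choose (2 * m - n - 1 - 2 * j) : ℂ)) ∧
    (2 * m ≤ n →
      (∮ ζ in C(0, R), ζ ^ (2 * m) /
          ((ζ - 1) ^ (1 / 2 : ℂ) * (ζ + 1) ^ (1 / 2 : ℂ) * (ζ - 1) ^ (n + 1))) = 0) := by
  have hres := hasSum_circleIntegral_pow_div (2 * m) n hR
  refine ⟨fun hn => ?_, fun hn => ?_⟩
  · have hexp : ∀ p : ℕ × ℕ, ((2 * m : ℕ) : ℤ) - n - 2 - ↑(2 * p.1 + p.2) = -1 ↔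
        2 * p.1 + p.2 = 2 * m - n - 1 := fun p => by omega
    simp only [hexp] at hres
    rw [hres.unique (hasSum_ite_two_mul_add_eq _ _), ← mul_sum, one_div,
      inv_mul_cancel_left₀ (by simp [Real.pi_ne_zero, I_ne_zero])]
    refine sum_congr rfl fun j hj => ?_
    simp only [mem_range] at hj
    rw [doubleCoeff, ringChoose_add_sub_one_eq_pochC_div_factorial, Nat.choose_symm_add,
      show n + (2 * m - n - 1 - 2 * j) = 2 * m - 1 - 2 * j by omega]
  · have hexp : ∀ p : ℕ × ℕ, ¬((2 * m : ℕ) : ℤ) - n - 2 - ↑(2 * p.1 + p.2) = -1 :=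
      fun p => by omega
    simp only [hexp, if_false] at hres
    exact hres.unique hasSum_zero
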